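/- Let R = [a,b] × [c,d] with a < b, c < d, let H : ℝ² → ℝ² be of class C² and injective on an open neighborhood of R with det DH(x) ≠ 0 for all x, let ε ∈ {+1, −1} be the (constant) sign of det DH on R, let F be a C¹ vector field on H(R), and let F̂(x) = (DH(x))ᵀ F(H(x)). Then ∬_{H(R)} scurl F dA = ε · ∬_R scurl F̂ dA. -/

import Mathlib

/-!
By the change of variables formula, `∬_{H(R)} scurl F = ∬_R |det DH| · (scurl F) ∘ H`.
Pointwise, `scurl F̂ = det DH · (scurl F) ∘ H`: differentiating `F̂ = (DH)ᵀ (F ∘ H)` produces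
second-derivative terms `⟨F ∘ H, D²H(e₁, e₂)⟩` in both partial derivatives, which cancel by the
symmetry of `D²H`, and what remains is the 2×2 identity
`⟨DF(A e₁), A e₂⟩ - ⟨DF(A e₂), A e₁⟩ = det A · scurl F` for `A = DH`.
Finally `|det DH| = ε det DH`.
-/

open MeasureTheory Filter Topology

/-- The Euclidean dot product on `ℝ × ℝ`. -/
def dot (u v : ℝ × ℝ) : ℝ := u.1 * v.1 + u.2 * v.2

noncomputable def scurl (P Q : ℝ × ℝ → ℝ) (x : ℝ × ℝ) : ℝ :=
  fderiv ℝ Q x (1, 0) - fderiv ℝ P x (0, 1)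

/-- The field `F̂ = (DH)ᵀ (F ∘ H)` for `F = (M, N)`. -/
noncomputable def pullback (H : ℝ × ℝ → ℝ × ℝ) (M N : ℝ × ℝ → ℝ) (x : ℝ × ℝ) : ℝ × ℝ :=
  (dot (M (H x), N (H x)) (fderiv ℝ H x (1, 0)), dot (M (H x), N (H x)) (fderiv ℝ H x (0, 1)))

theorem scurl_congr_of_eventuallyEq {P₁ P₂ Q₁ Q₂ : ℝ × ℝ → ℝ} {x : ℝ × ℝ}
    (hP : P₁ =ᶠ[𝓝 x] P₂) (hQ : Q₁ =ᶠ[𝓝 x] Q₂) : scurl P₁ Q₁ x = scurl P₂ Q₂ x := by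
  rw [scurl, scurl, hP.fderiv_eq, hQ.fderiv_eq]

theorem ContinuousLinearMap.apply_eq_fst_mul_add_snd_mul (L : ℝ × ℝ →L[ℝ] ℝ) (v : ℝ × ℝ) :
    L v = v.1 * L (1, 0) + v.2 * L (0, 1) := by
  conv_lhs => rw [show v = v.1 • ((1 : ℝ), (0 : ℝ)) + v.2 • ((0 : ℝ), (1 : ℝ)) by simp]
  rw [map_add, map_smul, map_smul, smul_eq_mul, smul_eq_mul]

theorem ContinuousLinearMap.det_prod_eq (A : ℝ × ℝ →L[ℝ] ℝ × ℝ) :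
    A.det = (A (1, 0)).1 * (A (0, 1)).2 - (A (0, 1)).1 * (A (1, 0)).2 := by
  rw [ContinuousLinearMap.det, ← LinearMap.det_toMatrix (Module.Basis.finTwoProd ℝ),
    Matrix.det_fin_two]
  simp [LinearMap.toMatrix_apply]

theorem dot_sub_dot_eq_det_mul (A : ℝ × ℝ →L[ℝ] ℝ × ℝ) (P Q : ℝ × ℝ →L[ℝ] ℝ) :
    dot (P (A (1, 0)), Q (A (1, 0))) (A (0, 1)) - dot (P (A (0, 1)), Q (A (0, 1))) (A (1, 0))
      = A.det * (Q (1, 0) - P (0, 1)) := by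
  simp only [dot, A.det_prod_eq, P.apply_eq_fst_mul_add_snd_mul (A _),
    Q.apply_eq_fst_mul_add_snd_mul (A _)]
  ring

theorem fderiv_dot_comp_fderiv_apply {H : ℝ × ℝ → ℝ × ℝ} {M N : ℝ × ℝ → ℝ} {x : ℝ × ℝ}
    (hH : ContDiffAt ℝ 2 H x) (hM : DifferentiableAt ℝ M (H x))
    (hN : DifferentiableAt ℝ N (H x)) (v w : ℝ × ℝ) :
    fderiv ℝ (fun p => dot (M (H p), N (H p)) (fderiv ℝ H p v)) x w
      = dot (M (H x), N (H x)) (fderiv ℝ (fderiv ℝ H) x w v)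
        + dot (fderiv ℝ M (H x) (fderiv ℝ H x w), fderiv ℝ N (H x) (fderiv ℝ H x w))
            (fderiv ℝ H x v) := by
  have hDH : HasFDerivAt H (fderiv ℝ H x) x :=
    (hH.differentiableAt two_ne_zero).hasFDerivAt
  have hD2H : HasFDerivAt (fun p => fderiv ℝ H p v) ((fderiv ℝ (fderiv ℝ H) x).flip v) x := by
    simpa using ((hH.fderiv_right (m := 1) le_rfl).differentiableAt one_ne_zero).hasFDerivAt
      |>.clm_apply (hasFDerivAt_const v x)
  have hF : HasFDerivAt (fun p => dot (M (H p), N (H p)) (fderiv ℝ H p v)) _ x :=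
    ((hM.hasFDerivAt.comp x hDH).mul hD2H.fst).add ((hN.hasFDerivAt.comp x hDH).mul hD2H.snd)
  rw [hF.fderiv]
  simp only [Function.comp_apply, add_apply, smul_apply,
    ContinuousLinearMap.comp_apply, ContinuousLinearMap.flip_apply, ContinuousLinearMap.coe_fst',
    ContinuousLinearMap.coe_snd', smul_eq_mul, dot]
  ring

theorem scurl_pullback {H : ℝ × ℝ → ℝ × ℝ} {M N : ℝ × ℝ → ℝ} {x : ℝ × ℝ}
    (hH : ContDiffAt ℝ 2 H x) (hM : DifferentiableAt ℝ M (H x))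
    (hN : DifferentiableAt ℝ N (H x)) :
    scurl (fun p => (pullback H M N p).1) (fun p => (pullback H M N p).2) x
      = (fderiv ℝ H x).det * scurl M N (H x) := by
  have hsymm := hH.isSymmSndFDerivAt (by simp)
  simp only [scurl, pullback, fderiv_dot_comp_fderiv_apply hH hM hN, hsymm (1, 0) (0, 1)]
  rw [← dot_sub_dot_eq_det_mul]
  ring

theorem abs_eq_mul_of_pos_mul {ε t : ℝ} (hε : ε = 1 ∨ ε = -1) (h : 0 < ε * t) :
    |t| = ε * t := by
  rcases hε with rfl | rfl
  · rw [one_mul] at h ⊢; exact abs_of_pos h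
  · rw [neg_one_mul] at h ⊢; exact abs_of_neg (neg_pos.mp h)

theorem integral_scurl_image_eq_general
    (a b c d : ℝ)
    (U : Set (ℝ × ℝ)) (hU : IsOpen U)
    (hRU : Set.Icc a b ×ˢ Set.Icc c d ⊆ U)
    (H : ℝ × ℝ → ℝ × ℝ) (hH : ContDiffOn ℝ 2 H U)
    (hinj : Set.InjOn H U)
    (ε : ℝ) (hε : ε = 1 ∨ ε = -1)
    (hdet : ∀ x ∈ U, 0 < ε * (fderiv ℝ H x).det)
    (V : Set (ℝ × ℝ)) (hV : IsOpen V)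
    (hSV : H '' (Set.Icc a b ×ˢ Set.Icc c d) ⊆ V)
    (M N : ℝ × ℝ → ℝ)
    (hM : ContDiffOn ℝ 1 M V) (hN : ContDiffOn ℝ 1 N V)
    (Fhat : ℝ × ℝ → ℝ × ℝ)
    (hFhat : ∀ x ∈ U,
      Fhat x = (dot (M (H x), N (H x)) (fderiv ℝ H x (1, 0)),
                dot (M (H x), N (H x)) (fderiv ℝ H x (0, 1)))) :
    ∫ p in H '' (Set.Icc a b ×ˢ Set.Icc c d),
        (fderiv ℝ N p (1, 0) - fderiv ℝ M p (0, 1))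
      = ε * ∫ x in Set.Icc a b ×ˢ Set.Icc c d,
          (fderiv ℝ (fun p => (Fhat p).2) x (1, 0)
            - fderiv ℝ (fun p => (Fhat p).1) x (0, 1)) := by
  set R := Set.Icc a b ×ˢ Set.Icc c d
  have hRmeas : MeasurableSet R := measurableSet_Icc.prod measurableSet_Icc
  have hHx : ∀ x ∈ U, ContDiffAt ℝ 2 H x := fun x hx => hH.contDiffAt (hU.mem_nhds hx)
  have hFx : ∀ x ∈ R, DifferentiableAt ℝ M (H x) ∧ DifferentiableAt ℝ N (H x) := fun x hx =>
    have hHxV := hV.mem_nhds (hSV ⟨x, hx, rfl⟩)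
    ⟨(hM.contDiffAt hHxV).differentiableAt one_ne_zero,
      (hN.contDiffAt hHxV).differentiableAt one_ne_zero⟩
  have hFhat_eq : ∀ x ∈ R, Fhat =ᶠ[𝓝 x] pullback H M N := fun x hx =>
    eventually_of_mem (hU.mem_nhds (hRU hx)) hFhat
  rw [integral_image_eq_integral_abs_det_fderiv_smul volume hRmeas
    (fun x hx => ((hHx x (hRU hx)).differentiableAt two_ne_zero).hasFDerivAt.hasFDerivWithinAt)
    (hinj.mono hRU), ← integral_const_mul]
  refine setIntegral_congr_fun hRmeas fun x hx => ?_
  change |(fderiv ℝ H x).det| • scurl M N (H x)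
    = ε * scurl (fun p => (Fhat p).1) (fun p => (Fhat p).2) x
  rw [scurl_congr_of_eventuallyEq ((hFhat_eq x hx).mono fun _ h => congrArg Prod.fst h)
      ((hFhat_eq x hx).mono fun _ h => congrArg Prod.snd h),
    scurl_pullback (hHx x (hRU hx)) (hFx x hx).1 (hFx x hx).2,
    abs_eq_mul_of_pos_mul hε (hdet x (hRU hx)), smul_eq_mul, mul_assoc]

/-- Let `R = [a,b] × [c,d]` (with `a < b`, `c < d`), let `H` be C² and injective
on an open neighborhood `U` of `R` with `det DH ≠ 0` everywhere on `U`, let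
`ε ∈ {+1, −1}` be the constant sign of `det DH`, let `F = (M, N)` be a C¹
vector field on (an open neighborhood of) `H(R)`, and let
`F̂ (x) = (DH(x))ᵀ F(H x)`.  Then `∬_{H(R)} scurl F dA = ε · ∬_R scurl F̂ dA`. -/
theorem integral_scurl_image_eq
    (a b c d : ℝ) (hab : a < b) (hcd : c < d)
    (U : Set (ℝ × ℝ)) (hU : IsOpen U)
    (hRU : Set.Icc a b ×ˢ Set.Icc c d ⊆ U)
    (H : ℝ × ℝ → ℝ × ℝ) (hH : ContDiffOn ℝ 2 H U)
    (hinj : Set.InjOn H U)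
    (ε : ℝ) (hε : ε = 1 ∨ ε = -1)
    (hdet : ∀ x ∈ U, 0 < ε * (fderiv ℝ H x).det)
    (V : Set (ℝ × ℝ)) (hV : IsOpen V)
    (hSV : H '' (Set.Icc a b ×ˢ Set.Icc c d) ⊆ V)
    (M N : ℝ × ℝ → ℝ)
    (hM : ContDiffOn ℝ 1 M V) (hN : ContDiffOn ℝ 1 N V)
    (Fhat : ℝ × ℝ → ℝ × ℝ)
    (hFhat : ∀ x ∈ U,
      Fhat x = (dot (M (H x), N (H x)) (fderiv ℝ H x (1, 0)),
                dot (M (H x), N (H x)) (fderiv ℝ H x (0, 1)))) :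
    ∫ p in H '' (Set.Icc a b ×ˢ Set.Icc c d),
        (fderiv ℝ N p (1, 0) - fderiv ℝ M p (0, 1))
      = ε * ∫ x in Set.Icc a b ×ˢ Set.Icc c d,
          (fderiv ℝ (fun p => (Fhat p).2) x (1, 0)
            - fderiv ℝ (fun p => (Fhat p).1) x (0, 1)) :=
  integral_scurl_image_eq_general a b c d U hU hRU H hH hinj ε hε hdet V hV hSV M N hM hN Fhat hFhat
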